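/- Let t be a homogeneous term in r variables with gcd(t) = 1 and let c ≥ 0. Every DFA representing the set {a ∈ ℤ^r : t[a] > c} has at least ||t||^− + ||t||^+ states. -/

import Mathlib

/-
Since `gcd(t) = 1` and every integer vector is encoded by a nonempty word, every value `q` of `t`
is `t[⟨w_q⟩]` for some word `w_q`. Appending a word `u` of length `L` turns the value `q` into
`ρ^L q + t[⟨u⟩_ℕ]`, and letting `⟨u⟩_ℕ` be `v` on the negative (resp. positive) coefficients of `t`
and `0` elsewhere gives `t[⟨u⟩_ℕ] = -‖t‖⁻ v` (resp. `‖t‖⁺ v`). For `-‖t‖⁺ ≤ q < q' < ‖t‖⁻` and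
`ρ^L > c + ‖t‖⁻ + ‖t‖⁺`, one of these multiples lies in `(c - ρ^L q', c - ρ^L q]`, so `w_q u` is
rejected while `w_{q'} u` is accepted. Hence the `‖t‖⁻ + ‖t‖⁺` states reached by the `w_q` are
pairwise distinct.
-/


namespace Presburger

/-- A letter of the alphabet `Σ^r`, where `Σ = {0, …, ρ-1}`. -/
abbrev Letter (ρ r : ℕ) := Fin r → Fin ρ

/-- The natural number encoded by a word over `Σ` (most significant digit first). -/
def natVal (ρ : ℕ) (w : List ℕ) : ℕ := w.foldl (fun acc b => ρ * acc + b) 0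

/-- The integer encoded by a nonempty word over `Σ` (ρ's complement,
most significant digit first); the empty word gets the junk value `0`. -/
def intVal (ρ : ℕ) : List ℕ → ℤ
  | [] => 0
  | b :: u => (natVal ρ u : ℤ) - (if b = 0 then 0 else (ρ : ℤ) ^ u.length)

/-- The tuple of natural numbers encoded track-wise by a word over `Σ^r` (as integers). -/
def natVec (ρ r : ℕ) (w : List (Letter ρ r)) : Fin r → ℤ :=
  fun i => (natVal ρ (w.map fun b => (b i : ℕ)) : ℤ)

/-- The tuple of integers encoded track-wise by a nonempty word over `Σ^r`. -/
def intVec (ρ r : ℕ) (w : List (Letter ρ r)) : Fin r → ℤ :=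
  fun i => intVal ρ (w.map fun b => (b i : ℕ))

/-- A language over `Σ^r` represents a set `U ⊆ ℤ^r` if it consists exactly of the
nonempty words encoding a member of `U`. -/
def Represents (ρ r : ℕ) (L : Language (Letter ρ r)) (U : Set (Fin r → ℤ)) : Prop :=
  ∀ w : List (Letter ρ r), w ∈ L ↔ (w ≠ [] ∧ intVec ρ r w ∈ U)

/-- A DFA represents `U ⊆ ℤ^r` if its accepted language does. -/
def DFARepresents (ρ r : ℕ) {σ : Type*} (M : DFA (Letter ρ r) σ) (U : Set (Fin r → ℤ)) : Prop :=
  Represents ρ r M.accepts U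

/-- Value of the homogeneous term with coefficients `k` at the point `a`. -/
def tval {r : ℕ} (k : Fin r → ℤ) (a : Fin r → ℤ) : ℤ := ∑ i, k i * a i

/-- A homogeneous term is `0` or has all its coefficients nonzero. -/
def Homog {r : ℕ} (k : Fin r → ℤ) : Prop := k = 0 ∨ ∀ i, k i ≠ 0

/-- `σ(b)`: componentwise `0` if the digit is `0` and `-1` otherwise. -/
def sgnLetter {ρ r : ℕ} (b : Letter ρ r) : Fin r → ℤ :=
  fun i => if (b i : ℕ) = 0 then 0 else -1

/-- The letter `b` viewed as a tuple of integers. -/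
def letterInt {ρ r : ℕ} (b : Letter ρ r) : Fin r → ℤ := fun i => ((b i : ℕ) : ℤ)

/-- `‖t‖⁺`: the sum of the positive coefficients of `t`. -/
def posNorm {r : ℕ} (k : Fin r → ℤ) : ℤ := ∑ i, max (k i) 0

/-- `‖t‖⁻`: the sum of the absolute values of the negative coefficients of `t`. -/
def negNorm {r : ℕ} (k : Fin r → ℤ) : ℤ := ∑ i, max (-k i) 0

/-- `gcd(t)`: the gcd of the absolute values of the coefficients of `t`. -/
def gcdT {r : ℕ} (k : Fin r → ℤ) : ℕ := Finset.univ.gcd fun i => (k i).natAbs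

/-- The transition function `η` of the infinite-state automaton for `t`,
restricted to the integer states: `η(q, b) = ρ·q + t[b]`. -/
def etaStep (ρ : ℕ) {r : ℕ} (k : Fin r → ℤ) (q : ℤ) (b : Letter ρ r) : ℤ :=
  ρ * q + tval k (letterInt b)

/-- The transition of `η` out of the initial state: `η(q_I, b) = t[σ(b)]`. -/
def etaInit (ρ : ℕ) {r : ℕ} (k : Fin r → ℤ) (b : Letter ρ r) : ℤ :=
  tval k (sgnLetter b)

/-- A state `q` is small (for `t ⋈ c`) if `q < min{c, -‖t‖⁺}`. -/
def IsSmall {r : ℕ} (k : Fin r → ℤ) (c q : ℤ) : Prop := q < min c (-posNorm k)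

/-- A state `q` is large (for `t ⋈ c`) if `q > max{c, ‖t‖⁻}`. -/
def IsLarge {r : ℕ} (k : Fin r → ℤ) (c q : ℤ) : Prop := max c (negNorm k) < q

/-- The six relations `=, ≠, <, ≤, >, ≥` on `ℤ`. -/
def rel6 : Set (ℤ → ℤ → Prop) :=
  {fun x y => x = y, fun x y => x ≠ y, fun x y => x < y,
   fun x y => x ≤ y, fun x y => x > y, fun x y => x ≥ y}

/-- Clamp an integer into the state set `{m, …, n}`; yields `none` (the initial state)
only in the degenerate case `m > n`, which never occurs for small `m` and large `n`. -/
noncomputable def clampSt (m n x : ℤ) : Option ↥(Finset.Icc m n) :=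
  if h : max m (min n x) ∈ Finset.Icc m n then some ⟨max m (min n x), h⟩ else none

/-- The DFA `A^{t ⋈ c}_{(m,n)}` for the (in)equation `t ⋈ c`: states are
`q_I = none` together with `{m, …, n}`, transitions clamp `η` to `[m, n]`, and the
accepting states are the integer states `q` with `q ⋈ c`. -/
noncomputable def ineqDFA (ρ : ℕ) {r : ℕ} (k : Fin r → ℤ) (m n : ℤ) (rel : ℤ → ℤ → Prop) (c : ℤ) :
    DFA (Letter ρ r) (Option ↥(Finset.Icc m n)) where
  step q b :=
    match q with
    | none => clampSt m n (etaInit ρ k b)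
    | some z => clampSt m n (etaStep ρ k z.val b)
  start := none
  accept := {q | ∃ z : ↥(Finset.Icc m n), q = some z ∧ rel z.val c}

/-- Two states of a DFA are equivalent if they accept exactly the same words. -/
def stEquiv {α : Type*} {σ : Type*} (M : DFA α σ) (p q : σ) : Prop :=
  ∀ w : List α, (M.evalFrom p w ∈ M.accept ↔ M.evalFrom q w ∈ M.accept)

end Presburger

namespace Presburger

open Finset

section Encoding

variable {ρ r : ℕ}

lemma foldl_digits (w : List ℕ) (a : ℕ) :
    w.foldl (fun acc b => ρ * acc + b) a = ρ ^ w.length * a + natVal ρ w := by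
  induction w generalizing a with
  | nil => simp [natVal]
  | cons b u ih =>
    simp only [natVal, List.foldl_cons, List.length_cons]
    rw [ih, ih (ρ * 0 + b)]
    ring

lemma natVal_append (x y : List ℕ) :
    natVal ρ (x ++ y) = ρ ^ y.length * natVal ρ x + natVal ρ y := by
  rw [natVal, List.foldl_append]
  exact foldl_digits y _

lemma intVal_append {v : List ℕ} (hv : v ≠ []) (u : List ℕ) :
    intVal ρ (v ++ u) = (ρ : ℤ) ^ u.length * intVal ρ v + natVal ρ u := by
  obtain ⟨b, v, rfl⟩ := List.exists_cons_of_ne_nil hv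
  simp only [List.cons_append, intVal, natVal_append, List.length_append]
  push_cast
  split <;> ring

lemma intVec_append {w : List (Letter ρ r)} (hw : w ≠ []) (u : List (Letter ρ r)) :
    intVec ρ r (w ++ u) = (ρ : ℤ) ^ u.length • intVec ρ r w + natVec ρ r u := by
  ext i
  simpa [intVec, natVec] using intVal_append (by simpa using hw) (u.map fun b => (b i : ℕ))

lemma intVec_singleton (b : Letter ρ r) : intVec ρ r [b] = sgnLetter b := by
  ext i
  by_cases h : (b i : ℕ) = 0 <;> simp [intVec, sgnLetter, intVal, natVal, h]

lemma natVec_nil : natVec ρ r [] = 0 := by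
  ext i
  simp [natVec, natVal]

lemma natVec_append_singleton (u : List (Letter ρ r)) (b : Letter ρ r) :
    natVec ρ r (u ++ [b]) = (ρ : ℤ) • natVec ρ r u + letterInt b := by
  ext i
  simp [natVec, letterInt, natVal]

lemma exists_natVec_eq (hρ : 0 < ρ) (L : ℕ) (a : Fin r → ℤ)
    (ha : ∀ i, 0 ≤ a i ∧ a i < (ρ : ℤ) ^ L) :
    ∃ u : List (Letter ρ r), u.length = L ∧ natVec ρ r u = a := by
  induction L generalizing a with
  | zero =>
    refine ⟨[], rfl, ?_⟩
    ext i
    have := ha i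
    rw [pow_zero] at this
    rw [natVec_nil, Pi.zero_apply]
    omega
  | succ L ih =>
    have hρ' : (0 : ℤ) < ρ := by exact_mod_cast hρ
    obtain ⟨u, hu, hua⟩ := ih (fun i => a i / ρ) fun i =>
      ⟨Int.ediv_nonneg (ha i).1 hρ'.le,
        (Int.ediv_lt_iff_lt_mul hρ').2 (by rw [← pow_succ]; exact (ha i).2)⟩
    have hdigit : ∀ i, (a i % ρ).toNat < ρ := fun i => by
      have := Int.emod_lt_of_pos (a i) hρ'
      omega
    refine ⟨u ++ [fun i => ⟨(a i % ρ).toNat, hdigit i⟩], by simp [hu], ?_⟩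
    ext i
    simp [natVec_append_singleton, hua, letterInt, Int.emod_nonneg _ hρ'.ne',
      Int.mul_ediv_add_emod]

lemma exists_intVec_eq (hρ : 2 ≤ ρ) (a : Fin r → ℤ) :
    ∃ w : List (Letter ρ r), w ≠ [] ∧ intVec ρ r w = a := by
  obtain ⟨L, hL⟩ := pow_unbounded_of_one_lt (∑ i, |a i|) (by exact_mod_cast hρ : (1 : ℤ) < ρ)
  have hbound : ∀ i, |a i| < (ρ : ℤ) ^ L := fun i =>
    (single_le_sum (fun j _ => abs_nonneg (a j)) (mem_univ i)).trans_lt hL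
  have hpos : (0 : ℤ) < (ρ : ℤ) ^ L := by positivity
  obtain ⟨u, hu, hua⟩ := exists_natVec_eq (by omega) L (fun i => a i % (ρ : ℤ) ^ L)
    fun i => ⟨Int.emod_nonneg _ hpos.ne', Int.emod_lt_of_pos _ hpos⟩
  -- ρ's complement: a negative `a i` is stored as `a i + ρ ^ L` behind a leading digit `1`.
  let sign : Letter ρ r := fun i => if a i < 0 then ⟨1, hρ⟩ else ⟨0, by omega⟩
  refine ⟨[sign] ++ u, by simp, ?_⟩
  ext i
  have hai := abs_lt.1 (hbound i)
  rw [intVec_append (List.cons_ne_nil _ _), intVec_singleton, hua, hu]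
  by_cases hneg : a i < 0
  · have : a i % (ρ : ℤ) ^ L = a i + (ρ : ℤ) ^ L := by
      rw [Int.emod_eq_add_self_emod, Int.emod_eq_of_lt (by linarith) (by linarith)]
    simp [sign, sgnLetter, hneg, this]
  · simp [sign, sgnLetter, hneg, Int.emod_eq_of_lt (not_lt.1 hneg) hai.2]

end Encoding

section Term

variable {r : ℕ} (k : Fin r → ℤ)

lemma tval_eq_dotProduct (a : Fin r → ℤ) : tval k a = k ⬝ᵥ a := rfl

lemma tval_intVec_append {ρ : ℕ} {w : List (Letter ρ r)} (hw : w ≠ []) (u : List (Letter ρ r)) :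
    tval k (intVec ρ r (w ++ u))
      = (ρ : ℤ) ^ u.length * tval k (intVec ρ r w) + tval k (natVec ρ r u) := by
  simp only [tval_eq_dotProduct, intVec_append hw, dotProduct_add, dotProduct_smul, smul_eq_mul]

lemma exists_tval_eq {k : Fin r → ℤ} (hgcd : gcdT k = 1) (q : ℤ) : ∃ a, tval k a = q := by
  obtain ⟨g, hg⟩ := gcd_eq_sum_mul univ k
  have hone : univ.gcd k = 1 := by
    refine Int.eq_one_of_dvd_one Int.finsetGcd_nonneg (Int.natAbs_dvd_natAbs.1 ?_)
    rw [Int.natAbs_one, ← hgcd]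
    exact dvd_gcd fun i _ => Int.natAbs_dvd_natAbs.2 (gcd_dvd (mem_univ i))
  refine ⟨q • g, ?_⟩
  rw [tval_eq_dotProduct, dotProduct_smul, smul_eq_mul, dotProduct, ← hg, hone, mul_one]

lemma negNorm_nonneg : 0 ≤ negNorm k :=
  sum_nonneg fun _ _ => le_max_right _ _

lemma posNorm_nonneg : 0 ≤ posNorm k :=
  sum_nonneg fun _ _ => le_max_right _ _

lemma tval_ite_neg (v : ℤ) : tval k (fun i => if k i < 0 then v else 0) = -(negNorm k * v) := by
  rw [negNorm, sum_mul, ← sum_neg_distrib]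
  refine sum_congr rfl fun i _ => ?_
  dsimp only
  split_ifs with h
  · rw [max_eq_left (by omega)]; ring
  · rw [max_eq_right (by omega)]; ring

lemma tval_ite_pos (v : ℤ) : tval k (fun i => if 0 < k i then v else 0) = posNorm k * v := by
  rw [posNorm, sum_mul]
  refine sum_congr rfl fun i _ => ?_
  dsimp only
  split_ifs with h
  · rw [max_eq_left h.le]
  · rw [max_eq_right (by omega)]; ring

lemma exists_bounded_tval_eq {b v s : ℤ} (hv : 0 ≤ v) (hvb : v < b)
    (hs : s = -(negNorm k * v) ∨ s = posNorm k * v) :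
    ∃ a : Fin r → ℤ, (∀ i, 0 ≤ a i ∧ a i < b) ∧ tval k a = s := by
  have hbound : ∀ p : Prop, [Decidable p] → 0 ≤ (if p then v else 0) ∧ (if p then v else 0) < b :=
    fun p _ => by split_ifs <;> omega
  rcases hs with rfl | rfl
  · exact ⟨_, fun i => hbound (k i < 0), tval_ite_neg k v⟩
  · exact ⟨_, fun i => hbound (0 < k i), tval_ite_pos k v⟩

end Term

lemma exists_separating_multiple {N P b c q q' : ℤ} (hN : 0 ≤ N) (hP : 0 ≤ P) (hc : 0 ≤ c)
    (hb : c + N + P < b) (hq : -P ≤ q) (hqq' : q < q') (hq' : q' < N) :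
    ∃ v, 0 ≤ v ∧ v < b ∧ ∃ s, (s = -(N * v) ∨ s = P * v) ∧ c - b * q' < s ∧ s ≤ c - b * q := by
  have hgap : b ≤ b * (q' - q) := le_mul_of_one_le_right (by omega) (by omega)
  rcases le_or_gt q' 0 with hq'0 | hq'0
  · obtain ⟨v, ⟨hlo, hhi⟩, -⟩ :=
      existsUnique_add_zsmul_mem_Ico (by omega : 0 < P) 0 (c - b * q' + 1)
    simp only [zero_add, smul_eq_mul] at hlo hhi
    have hbq' : b * q' ≤ 0 := mul_nonpos_of_nonneg_of_nonpos (by omega) hq'0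
    refine ⟨v, by nlinarith, ?_, P * v, .inr rfl, by nlinarith, by nlinarith⟩
    by_contra! hvb
    nlinarith [mul_le_mul_of_nonneg_left hvb hP,
      mul_le_mul_of_nonneg_left (by omega : 1 - P ≤ q') (by omega : (0 : ℤ) ≤ b)]
  rcases le_or_gt q 0 with hq0 | hq0
  · exact ⟨0, le_rfl, by omega, 0, .inr (by ring), by nlinarith, by nlinarith⟩
  obtain ⟨v, ⟨hlo, hhi⟩, -⟩ := existsUnique_add_zsmul_mem_Ico (by omega : 0 < N) 0 (b * q - c)
  simp only [zero_add, smul_eq_mul] at hlo hhi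
  refine ⟨v, by nlinarith, ?_, -(N * v), .inl rfl, by nlinarith, by nlinarith⟩
  by_contra! hvb
  nlinarith [mul_le_mul_of_nonneg_left hvb hN,
    mul_le_mul_of_nonneg_left (by omega : q ≤ N - 2) (by omega : (0 : ℤ) ≤ b)]

variable {ρ r : ℕ}

lemma exists_separating_suffix (hρ : 2 ≤ ρ) (k : Fin r → ℤ) {c q q' : ℤ} (hc : 0 ≤ c)
    (hq : -posNorm k ≤ q) (hqq' : q < q') (hq' : q' < negNorm k) :
    ∃ u : List (Letter ρ r), (ρ : ℤ) ^ u.length * q + tval k (natVec ρ r u) ≤ c ∧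
      c < (ρ : ℤ) ^ u.length * q' + tval k (natVec ρ r u) := by
  obtain ⟨L, hL⟩ := pow_unbounded_of_one_lt (c + negNorm k + posNorm k)
    (by exact_mod_cast hρ : (1 : ℤ) < ρ)
  obtain ⟨v, hv, hvb, s, hs, hlo, hhi⟩ := exists_separating_multiple
    (negNorm_nonneg k) (posNorm_nonneg k) hc hL hq hqq' hq'
  obtain ⟨a, ha, rfl⟩ := exists_bounded_tval_eq k hv hvb hs
  obtain ⟨u, rfl, rfl⟩ := exists_natVec_eq (by omega) L a ha
  exact ⟨u, by linarith, by linarith⟩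

lemma eval_ne_of_tval_lt (hρ : 2 ≤ ρ) {k : Fin r → ℤ} {c : ℤ} (hc : 0 ≤ c) {σ : Type*}
    {M : DFA (Letter ρ r) σ} (hM : DFARepresents ρ r M {a | tval k a > c})
    {w w' : List (Letter ρ r)} (hw : w ≠ []) (hw' : w' ≠ [])
    (hq : -posNorm k ≤ tval k (intVec ρ r w))
    (hlt : tval k (intVec ρ r w) < tval k (intVec ρ r w'))
    (hq' : tval k (intVec ρ r w') < negNorm k) :
    M.eval w ≠ M.eval w' := by
  intro heq
  obtain ⟨u, hle, hgt⟩ := exists_separating_suffix hρ k hc hq hlt hq'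
  have hacc : ∀ x : List (Letter ρ r), x ≠ [] → (x ++ u ∈ M.accepts ↔
      c < (ρ : ℤ) ^ u.length * tval k (intVec ρ r x) + tval k (natVec ρ r u)) := fun x hx => by
    simp [hM _, tval_intVec_append k hx, hx]
  have hsame : w ++ u ∈ M.accepts ↔ w' ++ u ∈ M.accepts := by
    simp only [DFA.mem_accepts, DFA.eval, DFA.evalFrom_of_append] at heq ⊢
    rw [heq]
  rw [hacc w hw, hacc w' hw'] at hsame
  exact absurd (hsame.2 hgt) (not_lt.2 hle)

theorem stmt_5_general (ρ r : ℕ) (hρ : 2 ≤ ρ) (k : Fin r → ℤ)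
    (hgcd : gcdT k = 1) (c : ℤ) (hc : 0 ≤ c)
    (σ : Type*) [Fintype σ] (M : DFA (Letter ρ r) σ)
    (hM : DFARepresents ρ r M {a | tval k a > c}) :
    negNorm k + posNorm k ≤ (Fintype.card σ : ℤ) := by
  have hword : ∀ q, ∃ w : List (Letter ρ r), w ≠ [] ∧ tval k (intVec ρ r w) = q := fun q => by
    obtain ⟨a, rfl⟩ := exists_tval_eq hgcd q
    obtain ⟨w, hw, rfl⟩ := exists_intVec_eq hρ a
    exact ⟨w, hw, rfl⟩
  choose w hw hwq using hword
  let f : Finset.Ico (-posNorm k) (negNorm k) → σ := fun q => M.eval (w q)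
  have hf : Function.Injective f := .of_lt_imp_ne fun q q' hlt => by
    have hq := Finset.mem_Ico.1 q.2
    have hq' := Finset.mem_Ico.1 q'.2
    refine eval_ne_of_tval_lt hρ hc hM (hw q) (hw q') ?_ ?_ ?_ <;> simp only [hwq] <;> omega
  have hcard := Fintype.card_le_of_injective f hf
  rw [Fintype.card_coe, Int.card_Ico] at hcard
  omega

/-- Every DFA representing `{a ∈ ℤ^r : t[a] > c}` (where `gcd(t) = 1`, `c ≥ 0`)
has at least `‖t‖⁻ + ‖t‖⁺` states. -/
theorem stmt_5 (ρ r : ℕ) (hρ : 2 ≤ ρ) (k : Fin r → ℤ) (hk : Homog k)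
    (hgcd : gcdT k = 1) (c : ℤ) (hc : 0 ≤ c)
    (σ : Type*) [Fintype σ] (M : DFA (Letter ρ r) σ)
    (hM : DFARepresents ρ r M {a | tval k a > c}) :
    negNorm k + posNorm k ≤ (Fintype.card σ : ℤ) :=
  stmt_5_general ρ r hρ k hgcd c hc σ M hM

end Presburger
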